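/- Let n, m ≥ 2 and let G = B_{n,m} be the dumbbell graph, viewed as the simplicial complex Δ(G). Then the facet family of δ_NF(Δ(G)) is exactly { {x_i, y_j} : 1 ≤ i ≤ n, 1 ≤ j ≤ m, (i, j) ≠ (1, 1) }; that is, δ_NF(Δ(G)) is the complete bipartite graph K_{n,m} on parts A and B with the single edge {x_1,y_1} removed. -/

import Mathlib

/-!
Complements of minimal vertex covers are exactly the maximal independent sets, i.e. the maximal
sets containing no facet. In `B_{n,m}` an independent set has at most one vertex in each clique
and does not contain both ends of the bridge. A maximal one meets both cliques, because a vertex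
other than `x₁` (resp. `y₁`) lies only on edges inside its clique and so can be added to any
independent set missing that clique.
-/

/-- `C` is a vertex cover of the complex with facet family `F`:
it meets every facet. -/
def IsVC {V : Type*} (F : Set (Set V)) (C : Set V) : Prop :=
  ∀ f ∈ F, (C ∩ f).Nonempty

/-- `C` is a minimal vertex cover. -/
def IsMinVC {V : Type*} (F : Set (Set V)) (C : Set V) : Prop :=
  IsVC F C ∧ ∀ D : Set V, D ⊂ C → ¬ IsVC F D

/-- The NF-operator on facet families: the facets of `nf F` are the
complements of the minimal vertex covers of `F`. -/
def nf {V : Type*} (F : Set (Set V)) : Set (Set V) :=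
  {S | ∃ C : Set V, IsMinVC F C ∧ S = Cᶜ}

/-- The dumbbell graph `B_{n,m}` as a family of edges (facets) on the vertex
set `Fin n ⊕ Fin m`: all pairs inside `A = range Sum.inl`, all pairs inside
`B = range Sum.inr`, and the bridge edge `{x₁, y₁}` (indices `0`). -/
def dumbbell (n m : ℕ) : Set (Set (Fin n ⊕ Fin m)) :=
  {e | (∃ i j : Fin n, i ≠ j ∧ e = {Sum.inl i, Sum.inl j}) ∨
       (∃ i j : Fin m, i ≠ j ∧ e = {Sum.inr i, Sum.inr j}) ∨
       (∃ (hn : 0 < n) (hm : 0 < m), e = {Sum.inl ⟨0, hn⟩, Sum.inr ⟨0, hm⟩})}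

def IsIndependent {V : Type*} (F : Set (Set V)) (S : Set V) : Prop :=
  ∀ f ∈ F, ¬ f ⊆ S

namespace IsIndependent

variable {V : Type*} {F : Set (Set V)} {S T : Set V} {a b : V}

theorem anti (hT : IsIndependent F T) (hST : S ⊆ T) : IsIndependent F S :=
  fun f hf hfS => hT f hf (hfS.trans hST)

theorem notMem_of_pair_mem (hS : IsIndependent F S) (hab : {a, b} ∈ F) (ha : a ∈ S) :
    b ∉ S :=
  fun hb => hS _ hab (Set.insert_subset ha (Set.singleton_subset_iff.2 hb))

protected theorem insert (hS : IsIndependent F S)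
    (h : ∀ f ∈ F, a ∈ f → ∃ b ∈ f, b ≠ a ∧ b ∉ S) : IsIndependent F (insert a S) := by
  intro f hf hfS
  by_cases ha : a ∈ f
  · obtain ⟨b, hbf, hba, hbS⟩ := h f hf ha
    exact hbS ((hfS hbf).resolve_left hba)
  · exact hS f hf fun x hx => (hfS hx).resolve_left fun hxa => ha (hxa ▸ hx)

end IsIndependent

section NF

variable {V : Type*} {F : Set (Set V)} {S : Set V}

theorem isVC_compl_iff : IsVC F Sᶜ ↔ IsIndependent F S :=
  forall₂_congr fun _ _ => by rw [Set.inter_comm, Set.inter_compl_nonempty_iff]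

theorem isMinVC_compl_iff : IsMinVC F Sᶜ ↔ Maximal (IsIndependent F) S := by
  rw [Set.maximal_iff_forall_ssuperset, IsMinVC, isVC_compl_iff]
  refine and_congr_right fun _ => ⟨fun h T hST => ?_, fun h D hD => ?_⟩
  · rw [← isVC_compl_iff]
    exact h Tᶜ (compl_lt_compl_iff_lt.2 hST)
  · rw [← compl_compl D, isVC_compl_iff]
    exact h (compl_lt_compl_iff_lt.1 (by rwa [compl_compl]))

theorem mem_nf_iff : S ∈ nf F ↔ Maximal (IsIndependent F) S := by
  rw [← isMinVC_compl_iff]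
  refine ⟨?_, fun h => ⟨Sᶜ, h, (compl_compl S).symm⟩⟩
  rintro ⟨C, hC, rfl⟩
  rwa [compl_compl]

end NF

section Dumbbell

open Sum

variable {n m : ℕ} {S : Set (Fin n ⊕ Fin m)}

theorem inl_pair_mem_dumbbell {i j : Fin n} (h : i ≠ j) :
    {inl i, inl j} ∈ dumbbell n m :=
  Or.inl ⟨i, j, h, rfl⟩

theorem inr_pair_mem_dumbbell {i j : Fin m} (h : i ≠ j) :
    {inr i, inr j} ∈ dumbbell n m :=
  Or.inr (Or.inl ⟨i, j, h, rfl⟩)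

theorem bridge_mem_dumbbell (hn : 0 < n) (hm : 0 < m) :
    {inl ⟨0, hn⟩, inr ⟨0, hm⟩} ∈ dumbbell n m :=
  Or.inr (Or.inr ⟨hn, hm, rfl⟩)

theorem IsIndependent.insert_inl_dumbbell (hS : IsIndependent (dumbbell n m) S)
    (hA : ∀ i, inl i ∉ S) {k : Fin n} (hk : k.val ≠ 0) :
    IsIndependent (dumbbell n m) (insert (inl k) S) := by
  refine hS.insert ?_
  rintro f (⟨a, b, hab, rfl⟩ | ⟨a, b, -, rfl⟩ | ⟨hn, _, rfl⟩) hkf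
    <;> simp only [Set.mem_insert_iff, Set.mem_singleton_iff, inl.injEq, reduceCtorEq,
      or_false] at hkf
  · rcases hkf with rfl | rfl
    · exact ⟨inl b, by simp, by simpa using hab.symm, hA b⟩
    · exact ⟨inl a, by simp, by simpa using hab, hA a⟩
  · exact ⟨inl ⟨0, hn⟩, by simp, by simp [Fin.ext_iff, Ne.symm hk], hA _⟩

theorem IsIndependent.insert_inr_dumbbell (hS : IsIndependent (dumbbell n m) S)
    (hB : ∀ j, inr j ∉ S) {k : Fin m} (hk : k.val ≠ 0) :
    IsIndependent (dumbbell n m) (insert (inr k) S) := by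
  refine hS.insert ?_
  rintro f (⟨a, b, -, rfl⟩ | ⟨a, b, hab, rfl⟩ | ⟨_, hm, rfl⟩) hkf
    <;> simp only [Set.mem_insert_iff, Set.mem_singleton_iff, inr.injEq, reduceCtorEq,
      false_or] at hkf
  · rcases hkf with rfl | rfl
    · exact ⟨inr b, by simp, by simpa using hab.symm, hB b⟩
    · exact ⟨inr a, by simp, by simpa using hab, hB a⟩
  · exact ⟨inr ⟨0, hm⟩, by simp, by simp [Fin.ext_iff, Ne.symm hk], hB _⟩

theorem maximal_isIndependent_dumbbell_pair {i : Fin n} {j : Fin m}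
    (hij : ¬(i.val = 0 ∧ j.val = 0)) :
    Maximal (IsIndependent (dumbbell n m)) {inl i, inr j} := by
  rw [Set.maximal_iff_forall_insert fun _ _ hT hST => hT.anti hST]
  refine ⟨?_, ?_⟩
  · rintro f (⟨a, b, hab, rfl⟩ | ⟨a, b, hab, rfl⟩ | ⟨_, _, rfl⟩) hf <;>
      simp only [Set.insert_subset_iff, Set.singleton_subset_iff, Set.mem_insert_iff,
        Set.mem_singleton_iff, inl.injEq, inr.injEq, reduceCtorEq, or_false,
        false_or] at hf
    · exact hab (hf.1.trans hf.2.symm)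
    · exact hab (hf.1.trans hf.2.symm)
    · exact hij ⟨congrArg Fin.val hf.1.symm, congrArg Fin.val hf.2.symm⟩
  · rintro (a | b) hv hind
    · have ha : a ≠ i := fun h => hv (by simp [h])
      exact hind _ (inl_pair_mem_dumbbell ha) (by simp [Set.insert_subset_iff])
    · have hb : b ≠ j := fun h => hv (by simp [h])
      exact hind _ (inr_pair_mem_dumbbell hb) (by simp [Set.insert_subset_iff])

theorem Maximal.exists_inl_mem_dumbbell (hS : Maximal (IsIndependent (dumbbell n m)) S)
    (hn : 2 ≤ n) : ∃ i, inl i ∈ S := by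
  by_contra! hA
  have h₁ : (⟨1, hn⟩ : Fin n).val ≠ 0 := one_ne_zero
  exact hA _ (hS.mem_of_prop_insert (hS.prop.insert_inl_dumbbell hA h₁))

theorem Maximal.exists_inr_mem_dumbbell (hS : Maximal (IsIndependent (dumbbell n m)) S)
    (hm : 2 ≤ m) : ∃ j, inr j ∈ S := by
  by_contra! hB
  have h₁ : (⟨1, hm⟩ : Fin m).val ≠ 0 := one_ne_zero
  exact hB _ (hS.mem_of_prop_insert (hS.prop.insert_inr_dumbbell hB h₁))

theorem Maximal.eq_pair_dumbbell (hS : Maximal (IsIndependent (dumbbell n m)) S)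
    (hn : 2 ≤ n) (hm : 2 ≤ m) :
    ∃ i j, ¬(i.val = 0 ∧ j.val = 0) ∧ S = {inl i, inr j} := by
  obtain ⟨i, hi⟩ := hS.exists_inl_mem_dumbbell hn
  obtain ⟨j, hj⟩ := hS.exists_inr_mem_dumbbell hm
  have hn0 : 0 < n := by omega
  have hm0 : 0 < m := by omega
  refine ⟨i, j, ?_, ?_⟩
  · rintro ⟨hi0, hj0⟩
    obtain rfl : i = ⟨0, hn0⟩ := Fin.ext hi0
    obtain rfl : j = ⟨0, hm0⟩ := Fin.ext hj0
    exact hS.prop.notMem_of_pair_mem (bridge_mem_dumbbell _ _) hi hj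
  · ext (a | b)
    · refine ⟨fun ha => ?_, by rintro (h | h) <;> simp_all⟩
      by_contra hai
      have hia : i ≠ a := Ne.symm (by simpa using hai)
      exact hS.prop.notMem_of_pair_mem (inl_pair_mem_dumbbell hia) hi ha
    · refine ⟨fun hb => ?_, by rintro (h | h) <;> simp_all⟩
      by_contra hbj
      have hjb : j ≠ b := Ne.symm (by simpa using hbj)
      exact hS.prop.notMem_of_pair_mem (inr_pair_mem_dumbbell hjb) hj hb

end Dumbbell

/-- For `n, m ≥ 2`, the facet family of `δ_NF(Δ(B_{n,m}))` is exactly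
`{ {xᵢ, yⱼ} : (i, j) ≠ (1, 1) }`, i.e. the complete bipartite graph `K_{n,m}`
with the single edge `{x₁, y₁}` removed. -/
theorem dumbbell_nf_one (n m : ℕ) (hn : 2 ≤ n) (hm : 2 ≤ m) :
    nf (dumbbell n m) =
      {e : Set (Fin n ⊕ Fin m) | ∃ (i : Fin n) (j : Fin m),
        ¬(i = (⟨0, by omega⟩ : Fin n) ∧ j = (⟨0, by omega⟩ : Fin m)) ∧
        e = {Sum.inl i, Sum.inr j}} := by
  ext S
  simp only [mem_nf_iff, Set.mem_ofPred_eq, Fin.ext_iff]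
  exact ⟨fun hS => hS.eq_pair_dumbbell hn hm,
    fun ⟨i, j, hij, hS⟩ => hS ▸ maximal_isIndependent_dumbbell_pair hij⟩
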